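/- Hickerson's formula for Dedekind sums: let p > q ≥ 1 be coprime integers, and suppose m_1, …, m_n are integers with each m_i ≥ 2 such that p/q = m_n − 1/(m_{n−1} − 1/(⋯ − 1/(m_2 − 1/m_1))) (a negative continued fraction expansion). Let q* be the unique integer with 0 < q* < p and q·q* ≡ 1 (mod p). Then 12·s(q,p) = (Σ_{i=1}^{n} m_i) + (q + q*)/p − 3n. -/

import Mathlib

/-- The sawtooth function `((x)) = x - ⌊x⌋ - 1/2` for non-integer `x`, and `0` for integer `x`. -/
def sawtooth (x : ℚ) : ℚ :=
  if x.den = 1 then 0 else x - ⌊x⌋ - 1/2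

/-- The Dedekind sum `s(q,p) = ∑_{k=1}^{p-1} ((k/p)) ((kq/p))`. -/
def dedekindSum (q p : ℤ) : ℚ :=
  ∑ k ∈ Finset.Ico 1 p.toNat, sawtooth ((k : ℚ) / p) * sawtooth ((k : ℚ) * q / p)

/-- The list of partial (inside-out) evaluations of the negative continued fraction
`m_n - 1/(m_{n-1} - 1/(⋯ - 1/m_1))` with partial quotients listed as `[m_1, …, m_n]`.
The head of the resulting list is the full evaluation. -/
def ncfPartials (ms : List ℤ) : List ℚ :=
  ms.foldl (fun acc m => ((m : ℚ) - 1 / acc.headI) :: acc) []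

open Finset

/-- floor-form of the Dedekind sum -/
def dsum' (q p : ℤ) : ℚ :=
  ∑ k ∈ Finset.Ico 1 p.toNat, ((k:ℚ)/p - 1/2) * ((k:ℚ)*q/p - ⌊(k:ℚ)*q/p⌋ - 1/2)

lemma den_ne_one {a b : ℤ} (hb : b ≠ 0) (h : ¬ b ∣ a) : ((a:ℚ)/b).den ≠ 1 := by
  intro hden
  apply h
  have := Rat.coe_int_num_of_den_eq_one hden
  have hb' : (b:ℚ) ≠ 0 := Int.cast_ne_zero.2 hb
  have : ((((a:ℚ)/b).num : ℚ)) * b = a := by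
    rw [this]; field_simp
  have : ((a:ℚ)/b).num * b = a := by exact_mod_cast this
  exact ⟨_, by rw [← this]; ring⟩

lemma sawtooth_eq {a b : ℤ} (hb : b ≠ 0) (h : ¬ b ∣ a) :
    sawtooth ((a:ℚ)/b) = (a:ℚ)/b - ⌊(a:ℚ)/b⌋ - 1/2 := by
  rw [sawtooth, if_neg (den_ne_one hb h)]

lemma dedekindSum_eq_dsum' {q p : ℤ} (hp : 0 < p) (hcop : IsCoprime q p) :
    dedekindSum q p = dsum' q p := by
  unfold dedekindSum dsum'
  apply Finset.sum_congr rfl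
  intro k hk
  simp only [Finset.mem_Ico] at hk
  have hk1 : (1:ℤ) ≤ k := by exact_mod_cast hk.1
  have hk2 : (k:ℤ) < p := by
    have := hk.2
    omega
  have hpk : ¬ p ∣ (k:ℤ) := by
    intro hdvd
    have := Int.le_of_dvd (by omega) hdvd
    omega
  have hpkq : ¬ p ∣ (k:ℤ) * q := by
    intro hdvd
    exact hpk (hcop.symm.dvd_of_dvd_mul_right hdvd)
  have h1 := sawtooth_eq (a := (k:ℤ)) (b := p) (by omega) hpk
  have h2 := sawtooth_eq (a := (k:ℤ)*q) (b := p) (by omega) hpkq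
  push_cast at h1 h2
  have hfl : ⌊(k:ℚ)/p⌋ = 0 := by
    rw [Int.floor_eq_zero_iff]
    constructor
    · positivity
    · rw [div_lt_one (by exact_mod_cast hp)]; exact_mod_cast hk2
  rw [h1, h2, hfl]
  norm_num

lemma dsum'_mod {q1 q2 p : ℤ} (h : q1 ≡ q2 [ZMOD p]) : dsum' q1 p = dsum' q2 p := by
  rcases eq_or_ne p 0 with rfl | hp
  · rfl
  obtain ⟨t, ht⟩ := h.dvd
  have hq2 : q2 = q1 + p * t := by linarith
  unfold dsum'
  apply Finset.sum_congr rfl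
  intro k hk
  have hp' : (p:ℚ) ≠ 0 := Int.cast_ne_zero.2 hp
  have key : (k:ℚ)*q2/p = (k:ℚ)*q1/p + ((k*t : ℤ) : ℚ) := by
    rw [hq2]; push_cast; field_simp
  rw [key, Int.floor_add_intCast]
  push_cast
  ring

lemma nonint_floor_lt {x : ℚ} (h : x.den ≠ 1) : (⌊x⌋ : ℚ) < x := by
  rcases lt_or_eq_of_le (Int.floor_le x) with h' | h'
  · exact h'
  · exact absurd (by rw [← h']; exact Rat.den_intCast _) h

lemma floor_neg_nonint {x : ℚ} (h : x.den ≠ 1) : ⌊-x⌋ = -⌊x⌋ - 1 := by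
  have h1 := Int.lt_floor_add_one x
  have h2 := nonint_floor_lt h
  have : (↑(-⌊x⌋ - 1) : ℚ) ≤ -x ∧ -x < (-⌊x⌋ - 1) + 1 := by
    constructor <;> push_cast <;> linarith
  rw [Int.floor_eq_iff.2 ⟨this.1, by exact_mod_cast this.2⟩]

lemma neg_den {x : ℚ} : (-x).den = x.den := Rat.neg_den x

lemma dsum'_neg {q p : ℤ} (hp : 0 < p) (hcop : IsCoprime q p) : dsum' (-q) p = - dsum' q p := by
  unfold dsum'
  rw [← Finset.sum_neg_distrib]
  apply Finset.sum_congr rfl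
  intro k hk
  simp only [Finset.mem_Ico] at hk
  have hk2 : (k:ℤ) < p := by have := hk.2; omega
  have hpk : ¬ p ∣ (k:ℤ) := by
    intro hdvd; have := Int.le_of_dvd (by exact_mod_cast hk.1) hdvd; omega
  have hpkq : ¬ p ∣ (k:ℤ) * q := fun hdvd => hpk (hcop.symm.dvd_of_dvd_mul_right hdvd)
  have hden : ((((k:ℤ)*q : ℤ) :ℚ)/(p:ℚ)).den ≠ 1 := den_ne_one (by omega) hpkq
  push_cast at hden
  have key : (k:ℚ)*(-q)/p = -((k:ℚ)*q/p) := by ring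
  push_cast
  rw [key, floor_neg_nonint hden]
  push_cast
  ring

lemma sum_Ico_id (n : ℕ) : ∑ k ∈ Ico 1 n, (k:ℚ) = n*(n-1)/2 := by
  induction n with
  | zero => simp
  | succ m ih =>
    rcases Nat.eq_zero_or_pos m with rfl | hm
    · simp
    · rw [Finset.sum_Ico_succ_top (by omega), ih]
      have : (1:ℚ) ≤ m := by exact_mod_cast hm
      push_cast
      ring

lemma sum_Ico_sq (n : ℕ) : ∑ k ∈ Ico 1 n, (k:ℚ)^2 = n*(n-1)*(2*n-1)/6 := by
  induction n with
  | zero => simp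
  | succ m ih =>
    rcases Nat.eq_zero_or_pos m with rfl | hm
    · simp
    · rw [Finset.sum_Ico_succ_top (by omega), ih]
      push_cast
      ring

/-- transfer sums along the multiplication-by-`q` permutation of residues mod `p` -/
lemma sum_perm {q p : ℤ} (hp : 0 < p) (hcop : IsCoprime q p) (φ : ℤ → ℚ) :
    ∑ k ∈ Ico 1 p.toNat, φ (((k:ℤ) * q) % p) = ∑ k ∈ Ico 1 p.toNat, φ (k:ℤ) := by
  obtain ⟨u, v, huv⟩ := hcop
  have key : ∀ a : ℤ, ((a * q) * u) % p = a % p := by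
    intro a
    obtain ⟨c, hc⟩ : p ∣ q*u - 1 := ⟨-v, by linarith⟩
    have hqu : q * u = 1 + p * c := by linarith
    have : a * q * u = a + p * (a * c) := by rw [mul_assoc, hqu]; ring
    rw [this, Int.add_mul_emod_self_left]
  have hmem : ∀ k : ℕ, k ∈ Ico 1 p.toNat → ¬ p ∣ (k:ℤ) * q := by
    intro k hk hdvd
    simp only [Finset.mem_Ico] at hk
    have hpk : p ∣ (k:ℤ) := (IsCoprime.symm ⟨u,v,huv⟩).dvd_of_dvd_mul_right hdvd
    have := Int.le_of_dvd (by exact_mod_cast hk.1) hpk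
    omega
  refine Finset.sum_nbij' (i := fun k => (((k:ℤ) * q) % p).toNat)
    (j := fun k => (((k:ℤ) * u) % p).toNat) ?_ ?_ ?_ ?_ ?_
  · intro k hk
    simp only [Finset.mem_Ico] at hk ⊢
    have h0 : 0 ≤ ((k:ℤ) * q) % p := Int.emod_nonneg _ (by omega)
    have h1 : ((k:ℤ) * q) % p < p := Int.emod_lt_of_pos _ hp
    have h2 : ((k:ℤ) * q) % p ≠ 0 := by
      intro h
      exact hmem k (Finset.mem_Ico.2 hk) (Int.dvd_of_emod_eq_zero h)
    omega
  · intro k hk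
    simp only [Finset.mem_Ico] at hk ⊢
    have h0 : 0 ≤ ((k:ℤ) * u) % p := Int.emod_nonneg _ (by omega)
    have h1 : ((k:ℤ) * u) % p < p := Int.emod_lt_of_pos _ hp
    have h2 : ((k:ℤ) * u) % p ≠ 0 := by
      intro h
      have hpu : p ∣ (k:ℤ) * u := Int.dvd_of_emod_eq_zero h
      have hcop' : IsCoprime u p := ⟨q, v, by linarith⟩
      have hpk : p ∣ (k:ℤ) := hcop'.symm.dvd_of_dvd_mul_right hpu
      have := Int.le_of_dvd (by exact_mod_cast hk.1) hpk
      omega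
    omega
  · intro k hk
    simp only [Finset.mem_Ico] at hk
    have h0 : 0 ≤ ((k:ℤ) * q) % p := Int.emod_nonneg _ (by omega)
    rw [Int.toNat_of_nonneg h0]
    have heq : ((((k:ℤ) * q) % p) * u) % p = (k:ℤ) % p := by
      rw [Int.mul_emod, Int.emod_emod_of_dvd _ dvd_rfl, ← Int.mul_emod, key]
    rw [heq]
    have hkp : (k:ℤ) % p = (k:ℤ) := Int.emod_eq_of_lt (by omega) (by omega)
    omega
  · intro k hk
    simp only [Finset.mem_Ico] at hk
    have h0 : 0 ≤ ((k:ℤ) * u) % p := Int.emod_nonneg _ (by omega)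
    rw [Int.toNat_of_nonneg h0]
    have heq : ((((k:ℤ) * u) % p) * q) % p = (k:ℤ) % p := by
      rw [Int.mul_emod, Int.emod_emod_of_dvd _ dvd_rfl, ← Int.mul_emod]
      have : (k:ℤ) * u * q = (k:ℤ) * q * u := by ring
      rw [this, key]
    rw [heq]
    have hkp : (k:ℤ) % p = (k:ℤ) := Int.emod_eq_of_lt (by omega) (by omega)
    omega
  · intro k hk
    have h0 : 0 ≤ ((k:ℤ) * q) % p := Int.emod_nonneg _ (by omega)
    rw [Int.toNat_of_nonneg h0]

lemma floor_cast_div (a b : ℤ) (hb : 0 < b) : ⌊(a:ℚ)/(b:ℚ)⌋ = a / b := by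
  have h1 : (b:ℚ) = ((b.toNat : ℕ) : ℚ) := by
    rw [show ((b.toNat : ℕ) : ℚ) = ((b.toNat : ℤ) : ℚ) by push_cast; ring,
      Int.toNat_of_nonneg hb.le]
  rw [h1, Rat.floor_intCast_div_natCast, Int.toNat_of_nonneg hb.le]

lemma dsum'_expand {q p : ℤ} (hp : 0 < p) :
    dsum' q p = (q:ℚ)/p^2 * (∑ k ∈ Ico 1 p.toNat, (k:ℚ)^2)
      - (1/p) * (∑ k ∈ Ico 1 p.toNat, (k:ℚ) * ((((k:ℤ)*q)/p : ℤ) : ℚ))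
      - (1+q)/(2*p) * (∑ k ∈ Ico 1 p.toNat, (k:ℚ))
      + (∑ k ∈ Ico 1 p.toNat, ((((k:ℤ)*q)/p : ℤ) : ℚ))/2
      + ((p:ℚ)-1)/4 := by
  have hp4 : ((p:ℚ)-1)/4 = ∑ k ∈ Ico 1 p.toNat, (1/4 : ℚ) := by
    rw [Finset.sum_const, Nat.card_Ico, nsmul_eq_mul]
    have : ((p.toNat - 1 : ℕ) : ℚ) = (p:ℚ) - 1 := by
      have h1 : 1 ≤ p.toNat := by omega
      push_cast [h1]
      have : ((p.toNat : ℤ) : ℚ) = (p:ℚ) := by rw [Int.toNat_of_nonneg hp.le]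
      push_cast at this ⊢
      linarith
    rw [this]; ring
  rw [hp4, Finset.mul_sum, Finset.mul_sum, Finset.mul_sum, Finset.sum_div,
    ← Finset.sum_sub_distrib, ← Finset.sum_sub_distrib, ← Finset.sum_add_distrib,
    ← Finset.sum_add_distrib]
  unfold dsum'
  apply Finset.sum_congr rfl
  intro k hk
  simp only [Finset.mem_Ico] at hk
  have hfl : ⌊(k:ℚ)*q/p⌋ = ((k:ℤ)*q)/p := by
    rw [show (k:ℚ)*q = (((k:ℤ)*q : ℤ):ℚ) by push_cast; ring, floor_cast_div _ _ hp]
  rw [hfl]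
  have hp0 : (p:ℚ) ≠ 0 := by exact_mod_cast hp.ne'
  field_simp
  ring

lemma sum_swap_G {p q : ℤ} (hp : 0 < p) (hq : 0 < q) (hcop : IsCoprime q p) :
    ∑ j ∈ Ico 1 q.toNat, (j:ℚ) * ((((j:ℤ)*p)/q : ℤ) : ℚ) =
      ∑ k ∈ Ico 1 p.toNat,
        ((q:ℚ)*((q:ℚ)-1)/2 - ((((k:ℤ)*q)/p : ℤ):ℚ) * (((((k:ℤ)*q)/p : ℤ):ℚ) + 1)/2) := by
  have step1 : ∀ j ∈ Ico 1 q.toNat, (j:ℚ) * ((((j:ℤ)*p)/q : ℤ) : ℚ)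
      = ∑ k ∈ Ico 1 p.toNat, if (k:ℤ)*q < (j:ℤ)*p then (j:ℚ) else 0 := by
    intro j hj
    simp only [Finset.mem_Ico] at hj
    set c : ℤ := ((j:ℤ)*p)/q with hc
    have hjq : (j:ℤ) < q := by omega
    have hj1 : (1:ℤ) ≤ (j:ℤ) := by exact_mod_cast hj.1
    have hdvd : ¬ q ∣ (j:ℤ)*p := by
      intro h
      have hqj : q ∣ (j:ℤ) := hcop.dvd_of_dvd_mul_right h
      have := Int.le_of_dvd (by omega) hqj
      omega
    have hb := Int.mul_ediv_add_emod ((j:ℤ)*p) q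
    have hr0 : 0 ≤ ((j:ℤ)*p) % q := Int.emod_nonneg _ (by omega)
    have hr1 : ((j:ℤ)*p) % q < q := Int.emod_lt_of_pos _ hq
    have hrne : ((j:ℤ)*p) % q ≠ 0 := fun h => hdvd (Int.dvd_of_emod_eq_zero h)
    have hlow : q*c < (j:ℤ)*p := by
      have : (1:ℤ) ≤ ((j:ℤ)*p) % q := by omega
      linarith
    have hhigh : (j:ℤ)*p < q*(c+1) := by
      have he : q*(c+1) = q*c + q := by ring
      linarith
    have hc0 : 0 ≤ c := Int.ediv_nonneg (by positivity) hq.le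
    have hcP : c < p := by
      have h1 : (j:ℤ)*p ≤ (q-1)*p := mul_le_mul_of_nonneg_right (by omega) hp.le
      have h2 : q*c < q*p := by nlinarith
      exact lt_of_mul_lt_mul_left h2 hq.le
    have hiff : ∀ k : ℕ, ((k:ℤ)*q < (j:ℤ)*p ↔ (k:ℤ) ≤ c) := by
      intro k
      constructor
      · intro h
        have : (k:ℤ)*q < (c+1)*q := by linarith [hhigh]
        have := lt_of_mul_lt_mul_right this hq.le
        omega
      · intro h
        have : (k:ℤ)*q ≤ c*q := mul_le_mul_of_nonneg_right h hq.le
        nlinarith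
    have hset : (Ico 1 p.toNat).filter (fun k : ℕ => (k:ℤ)*q < (j:ℤ)*p) = Ico 1 (c.toNat+1) := by
      ext k
      simp only [Finset.mem_filter, Finset.mem_Ico]
      rw [hiff k]
      omega
    rw [← Finset.sum_filter, hset, Finset.sum_const, Nat.card_Ico, nsmul_eq_mul]
    have : ((c.toNat + 1 - 1 : ℕ) : ℚ) = (c:ℚ) := by
      have : ((c.toNat : ℤ) : ℚ) = (c:ℚ) := by rw [Int.toNat_of_nonneg hc0]
      push_cast at this ⊢
      simpa using this
    rw [this]
    ring
  rw [Finset.sum_congr rfl step1, Finset.sum_comm]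
  apply Finset.sum_congr rfl
  intro k hk
  simp only [Finset.mem_Ico] at hk
  set f : ℤ := ((k:ℤ)*q)/p with hf
  have hk1 : (1:ℤ) ≤ (k:ℤ) := by exact_mod_cast hk.1
  have hkp : (k:ℤ) < p := by omega
  have hb := Int.mul_ediv_add_emod ((k:ℤ)*q) p
  have hr0 : 0 ≤ ((k:ℤ)*q) % p := Int.emod_nonneg _ (by omega)
  have hr1 : ((k:ℤ)*q) % p < p := Int.emod_lt_of_pos _ hp
  have hf0 : 0 ≤ f := Int.ediv_nonneg (by positivity) hp.le
  have hfq : f < q := by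
    have h1 : (k:ℤ)*q ≤ (p-1)*q := mul_le_mul_of_nonneg_right (by omega) hq.le
    have h2 : p*f < p*q := by nlinarith
    exact lt_of_mul_lt_mul_left h2 hp.le
  have hiff2 : ∀ j : ℕ, ((k:ℤ)*q < (j:ℤ)*p ↔ f + 1 ≤ (j:ℤ)) := by
    intro j
    constructor
    · intro h
      by_contra hcon
      push_neg at hcon
      have : (j:ℤ)*p ≤ f*p := mul_le_mul_of_nonneg_right (by omega) hp.le
      nlinarith
    · intro h
      have : (f+1)*p ≤ (j:ℤ)*p := mul_le_mul_of_nonneg_right h hp.le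
      nlinarith
  have hset2 : (Ico 1 q.toNat).filter (fun j : ℕ => (k:ℤ)*q < (j:ℤ)*p) = Ico (f.toNat+1) q.toNat := by
    ext j
    simp only [Finset.mem_filter, Finset.mem_Ico]
    rw [hiff2 j]
    omega
  rw [← Finset.sum_filter, hset2]
  have hsplit := Finset.sum_Ico_consecutive (fun j : ℕ => (j:ℚ)) (by omega : 1 ≤ f.toNat+1)
    (by omega : f.toNat+1 ≤ q.toNat)
  have hqQ : ((q.toNat : ℕ) : ℚ) = (q:ℚ) := by
    have : ((q.toNat : ℤ) : ℚ) = (q:ℚ) := by rw [Int.toNat_of_nonneg hq.le]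
    push_cast at this ⊢; exact this
  have hfF : ((f.toNat : ℕ) : ℚ) = (f:ℚ) := by
    have : ((f.toNat : ℤ) : ℚ) = (f:ℚ) := by rw [Int.toNat_of_nonneg hf0]
    push_cast at this ⊢; exact this
  have : ∑ j ∈ Ico (f.toNat+1) q.toNat, (j:ℚ)
      = (∑ j ∈ Ico 1 q.toNat, (j:ℚ)) - (∑ j ∈ Ico 1 (f.toNat+1), (j:ℚ)) := by
    rw [← hsplit]; ring
  rw [this, sum_Ico_id, sum_Ico_id, hqQ]
  push_cast [hfF]
  ring

lemma cast_toNat_q {p : ℤ} (hp : 0 ≤ p) : ((p.toNat : ℕ) : ℚ) = (p:ℚ) := by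
  have : ((p.toNat : ℤ) : ℚ) = (p:ℚ) := by rw [Int.toNat_of_nonneg hp]
  push_cast at this ⊢; exact this

set_option maxHeartbeats 1000000 in
lemma dsum'_reciprocity {p q : ℤ} (hp : 0 < p) (hq : 0 < q) (hcop : IsCoprime q p) :
    dsum' q p + dsum' p q = -(1/4) + ((p:ℚ)/q + (q:ℚ)/p + 1/((p:ℚ)*q))/12 := by
  have hp0 : (p:ℚ) ≠ 0 := by exact_mod_cast hp.ne'
  have hq0 : (q:ℚ) ≠ 0 := by exact_mod_cast hq.ne'
  set Fp : ℚ := ∑ k ∈ Ico 1 p.toNat, ((((k:ℤ)*q)/p : ℤ) : ℚ) with hFp_def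
  set Gp : ℚ := ∑ k ∈ Ico 1 p.toNat, (k:ℚ) * ((((k:ℤ)*q)/p : ℤ) : ℚ) with hGp_def
  set Hp : ℚ := ∑ k ∈ Ico 1 p.toNat, ((((k:ℤ)*q)/p : ℤ) : ℚ)^2 with hHp_def
  set Fq : ℚ := ∑ j ∈ Ico 1 q.toNat, ((((j:ℤ)*p)/q : ℤ) : ℚ) with hFq_def
  set Gq : ℚ := ∑ j ∈ Ico 1 q.toNat, (j:ℚ) * ((((j:ℤ)*p)/q : ℤ) : ℚ) with hGq_def
  -- closed forms for power sums
  have hS1p : ∑ k ∈ Ico 1 p.toNat, (k:ℚ) = (p:ℚ)*((p:ℚ)-1)/2 := by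
    rw [sum_Ico_id, cast_toNat_q hp.le]
  have hS2p : ∑ k ∈ Ico 1 p.toNat, (k:ℚ)^2 = (p:ℚ)*((p:ℚ)-1)*(2*(p:ℚ)-1)/6 := by
    rw [sum_Ico_sq, cast_toNat_q hp.le]
  have hS1q : ∑ j ∈ Ico 1 q.toNat, (j:ℚ) = (q:ℚ)*((q:ℚ)-1)/2 := by
    rw [sum_Ico_id, cast_toNat_q hq.le]
  have hS2q : ∑ j ∈ Ico 1 q.toNat, (j:ℚ)^2 = (q:ℚ)*((q:ℚ)-1)*(2*(q:ℚ)-1)/6 := by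
    rw [sum_Ico_sq, cast_toNat_q hq.le]
  -- permutation identities
  have hmod : ∀ k : ℕ, (((k:ℤ)*q % p : ℤ) : ℚ) = (q:ℚ)*(k:ℚ) - (p:ℚ)*((((k:ℤ)*q)/p : ℤ) : ℚ) := by
    intro k
    rw [Int.emod_def]
    push_cast
    ring
  have hperm1 : (q:ℚ) * ((p:ℚ)*((p:ℚ)-1)/2) - (p:ℚ)*Fp = (p:ℚ)*((p:ℚ)-1)/2 := by
    have h := sum_perm hp hcop (fun a => (a:ℚ))
    simp only [hmod] at h
    push_cast at h
    rw [Finset.sum_sub_distrib, ← Finset.mul_sum, ← Finset.mul_sum, ← hFp_def, hS1p] at h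
    linarith [h]
  have hperm2 : (q:ℚ)^2 * ((p:ℚ)*((p:ℚ)-1)*(2*(p:ℚ)-1)/6) - 2*(p:ℚ)*(q:ℚ)*Gp + (p:ℚ)^2*Hp
      = (p:ℚ)*((p:ℚ)-1)*(2*(p:ℚ)-1)/6 := by
    have h := sum_perm hp hcop (fun a => ((a:ℚ))^2)
    simp only [hmod] at h
    have hterm : ∀ k : ℕ, ((q:ℚ)*(k:ℚ) - (p:ℚ)*((((k:ℤ)*q)/p : ℤ) : ℚ))^2
        = (q:ℚ)^2*(k:ℚ)^2 - 2*(p:ℚ)*(q:ℚ)*((k:ℚ)*((((k:ℤ)*q)/p : ℤ) : ℚ))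
          + (p:ℚ)^2*(((((k:ℤ)*q)/p : ℤ) : ℚ)^2) := by
      intro k; ring
    simp only [hterm] at h
    push_cast at h
    rw [Finset.sum_add_distrib, Finset.sum_sub_distrib, ← Finset.mul_sum, ← Finset.mul_sum,
      ← Finset.mul_sum, ← hGp_def, ← hHp_def, hS2p] at h
    linarith [h]
  -- swap identity
  have hswap : Gq = ((p:ℚ)-1)*((q:ℚ)*((q:ℚ)-1)/2) - (Hp + Fp)/2 := by
    have h := sum_swap_G hp hq hcop
    rw [← hGq_def] at h
    have hrhs : ∑ k ∈ Ico 1 p.toNat,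
        ((q:ℚ)*((q:ℚ)-1)/2 - ((((k:ℤ)*q)/p : ℤ):ℚ) * (((((k:ℤ)*q)/p : ℤ):ℚ) + 1)/2)
        = (((p.toNat - 1:ℕ)):ℚ) * ((q:ℚ)*((q:ℚ)-1)/2) - (Hp + Fp)/2 := by
      have hterm : ∀ k : ℕ, (q:ℚ)*((q:ℚ)-1)/2 - ((((k:ℤ)*q)/p : ℤ):ℚ) * (((((k:ℤ)*q)/p : ℤ):ℚ) + 1)/2
          = (q:ℚ)*((q:ℚ)-1)/2 - (((((k:ℤ)*q)/p : ℤ):ℚ)^2/2 + ((((k:ℤ)*q)/p : ℤ):ℚ)/2) := by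
        intro k; ring
      simp only [hterm]
      rw [Finset.sum_sub_distrib, Finset.sum_add_distrib, Finset.sum_const, Nat.card_Ico,
        nsmul_eq_mul, ← Finset.sum_div, ← Finset.sum_div, ← hHp_def, ← hFp_def]
      ring
    rw [hrhs] at h
    have hPc : (((p.toNat - 1:ℕ)):ℚ) = (p:ℚ) - 1 := by
      have h1 : 1 ≤ p.toNat := by omega
      push_cast [h1]
      rw [cast_toNat_q hp.le]
    rw [hPc] at h
    exact h
  -- expansions
  have hEp := dsum'_expand (q := q) hp
  have hEq := dsum'_expand (q := p) hq
  rw [← hFp_def, ← hGp_def, hS1p, hS2p] at hEp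
  rw [← hFq_def, ← hGq_def, hS1q, hS2q] at hEq
  -- eliminate
  have hFp' : Fp = ((q:ℚ)-1)*((p:ℚ)-1)/2 := by
    have h2 : (p:ℚ)*Fp = (p:ℚ)*((((q:ℚ)-1)*((p:ℚ)-1))/2) := by linear_combination -hperm1
    exact mul_left_cancel₀ hp0 h2
  have hHp' : Hp = ((1 - (q:ℚ)^2) * ((p:ℚ)*((p:ℚ)-1)*(2*(p:ℚ)-1)) + 12*(p:ℚ)*(q:ℚ)*Gp)/(6*(p:ℚ)^2) := by
    rw [eq_div_iff (by positivity)]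
    linear_combination (6:ℚ) * hperm2
  have hFq' : Fq = ((p:ℚ)-1)*((q:ℚ)-1)/2 := by
    have h := sum_perm hq hcop.symm (fun a => (a:ℚ))
    have hmodq : ∀ j : ℕ, (((j:ℤ)*p % q : ℤ) : ℚ) = (p:ℚ)*(j:ℚ) - (q:ℚ)*((((j:ℤ)*p)/q : ℤ) : ℚ) := by
      intro j; rw [Int.emod_def]; push_cast; ring
    simp only [hmodq] at h
    push_cast at h
    rw [Finset.sum_sub_distrib, ← Finset.mul_sum, ← Finset.mul_sum, ← hFq_def, hS1q] at h
    have h2 : (q:ℚ)*Fq = (q:ℚ)*((((p:ℚ)-1)*((q:ℚ)-1))/2) := by linear_combination -h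
    exact mul_left_cancel₀ hq0 h2
  rw [hEp, hEq, hswap, hHp', hFp', hFq']
  field_simp
  ring

lemma headI_mem {l : List ℚ} (h : l ≠ []) : l.headI ∈ l := by
  cases l with
  | nil => simp at h
  | cons a t => exact List.mem_cons_self

lemma ncfPartials_append (l : List ℤ) (m : ℤ) :
    ncfPartials (l ++ [m]) = ((m:ℚ) - 1/(ncfPartials l).headI) :: ncfPartials l := by
  unfold ncfPartials
  simp

lemma ncfPartials_ne_nil {l : List ℤ} (h : l ≠ []) : ncfPartials l ≠ [] := by
  induction l using List.reverseRecOn with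
  | nil => simp at h
  | append_singleton l' m ih => rw [ncfPartials_append]; simp

lemma ncf_gt_one (ms : List ℤ) (hm : ∀ m ∈ ms, 2 ≤ m) : ∀ x ∈ ncfPartials ms, 1 < x := by
  induction ms using List.reverseRecOn with
  | nil => intro x hx; simp [ncfPartials] at hx
  | append_singleton l m ih =>
    intro x hx
    rw [ncfPartials_append] at hx
    have hm2 : (2:ℚ) ≤ (m:ℤ) := by exact_mod_cast hm m (by simp)
    rcases List.mem_cons.1 hx with rfl | hx'
    · rcases eq_or_ne l [] with rfl | hl
      · have hd : (ncfPartials []).headI = 0 := rfl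
        rw [hd]
        norm_num
        linarith
      · have hh : 1 < (ncfPartials l).headI :=
          ih (fun a ha => hm a (by simp [ha])) _ (headI_mem (ncfPartials_ne_nil hl))
        have h1 : 0 < 1/(ncfPartials l).headI := by positivity
        have h2 : 1/(ncfPartials l).headI < 1 := by
          rw [div_lt_one (by linarith)]; exact hh
        linarith
    · exact ih (fun a ha => hm a (by simp [ha])) _ hx'

lemma den_lt_num {x : ℚ} (h : 1 < x) : (x.den : ℤ) < x.num := by
  have h2 : (x.den : ℚ) < (x.num : ℚ) := by
    have hdiv := Rat.num_div_den x
    have hd : (0:ℚ) < (x.den:ℚ) := by exact_mod_cast x.pos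
    rw [div_eq_iff hd.ne'] at hdiv
    have := mul_lt_mul_of_pos_right h hd
    rw [one_mul] at this
    linarith [hdiv, this]
  exact_mod_cast h2

lemma coprime_den_num (x : ℚ) : IsCoprime (x.den : ℤ) x.num := by
  rw [Int.isCoprime_iff_gcd_eq_one, Int.gcd]
  simpa using Nat.Coprime.symm x.reduced

/-- the single-term case: `12 s(1,p) = (p-1)(p-2)/p` -/
lemma dsum'_one {p : ℤ} (hp : 0 < p) :
    12 * dsum' 1 p = ((p:ℚ)-1)*((p:ℚ)-2)/p := by
  have hp0 : (p:ℚ) ≠ 0 := by exact_mod_cast hp.ne'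
  rw [dsum'_expand hp]
  have hz : ∀ k ∈ Ico 1 p.toNat, ((k:ℤ)*1)/p = 0 := by
    intro k hk
    simp only [Finset.mem_Ico] at hk
    rw [mul_one]
    apply Int.ediv_eq_zero_of_lt (by positivity)
    omega
  have h1 : ∑ k ∈ Ico 1 p.toNat, (k:ℚ) * ((((k:ℤ)*1)/p : ℤ) : ℚ) = 0 := by
    apply Finset.sum_eq_zero
    intro k hk
    rw [hz k hk]
    simp
  have h2 : ∑ k ∈ Ico 1 p.toNat, ((((k:ℤ)*1)/p : ℤ) : ℚ) = 0 := by
    apply Finset.sum_eq_zero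
    intro k hk
    rw [hz k hk]
    simp
  rw [h1, h2, sum_Ico_id, sum_Ico_sq, cast_toNat_q hp.le]
  push_cast
  field_simp
  ring

lemma hick_aux : ∀ (ms : List ℤ), ms ≠ [] → (∀ m ∈ ms, 2 ≤ m) → ∀ (p q : ℤ), 1 ≤ q → q < p →
    IsCoprime q p → (ncfPartials ms).headI = (p : ℚ) / q → ∀ (qs : ℤ), 0 < qs → qs < p →
    q * qs ≡ 1 [ZMOD p] →
    12 * dedekindSum q p = (ms.sum : ℚ) + ((q : ℚ) + qs) / p - 3 * ms.length := by
  intro ms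
  induction ms using List.reverseRecOn with
  | nil => intro h; exact absurd rfl h
  | append_singleton l m ih =>
    intro _ hm p q hq hqp hcop heval qs hqs0 hqsp hinv
    have hp0 : (0:ℤ) < p := by omega
    have hq0 : (0:ℤ) < q := by omega
    have hm2 : 2 ≤ m := hm m (by simp)
    rw [ncfPartials_append] at heval
    simp only [List.headI_cons] at heval
    have hqQ0 : (q:ℚ) ≠ 0 := by exact_mod_cast hq0.ne'
    have hpQ0 : (p:ℚ) ≠ 0 := by exact_mod_cast hp0.ne'
    rcases eq_or_ne l [] with rfl | hl
    · -- base case : p/q = m, so q = 1, p = m, qs = 1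
      have hh0 : (ncfPartials ([]:List ℤ)).headI = 0 := rfl
      rw [hh0] at heval
      norm_num at heval
      have hpm : (p:ℚ) = m * q := by
        field_simp at heval
        linarith [heval]
      have hpmz : p = m * q := by exact_mod_cast hpm
      have hqdvd : q ∣ p := ⟨m, by linarith [hpmz]⟩
      have hq1 : q = 1 := by
        have hu := hcop.isUnit_of_dvd hqdvd
        rw [Int.isUnit_iff] at hu
        omega
      subst hq1
      have hpm' : p = m := by omega
      have hqs1 : qs = 1 := by
        have hdv : p ∣ 1 - 1 * qs := hinv.dvd
        have : 1 - 1 * qs = 0 := by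
          apply Int.eq_zero_of_abs_lt_dvd hdv
          rw [abs_lt]
          omega
        omega
      subst hqs1
      rw [dedekindSum_eq_dsum' hp0 isCoprime_one_left, dsum'_one hp0]
      simp only [List.nil_append, List.sum_cons, List.sum_nil, List.length_cons, List.length_nil]
      have hmp : (m:ℚ) = (p:ℚ) := by exact_mod_cast hpm'.symm
      rw [← hmp] at *
      push_cast
      field_simp
      ring
    · -- inductive step
      set x := (ncfPartials l).headI with hx
      have hx1 : 1 < x :=
        ncf_gt_one l (fun a ha => hm a (by simp [ha])) _ (headI_mem (ncfPartials_ne_nil hl))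
      have hx0 : x ≠ 0 := by intro h; rw [h] at hx1; norm_num at hx1
      set p' : ℤ := x.num with hp'
      set q' : ℤ := (x.den : ℤ) with hq'
      have hq'0 : (0:ℤ) < q' := by rw [hq']; exact_mod_cast x.pos
      have hq'p' : q' < p' := den_lt_num hx1
      have hp'0 : (0:ℤ) < p' := by omega
      have hp'2 : (2:ℤ) ≤ p' := by omega
      have hcop' : IsCoprime q' p' := coprime_den_num x
      have hq'Q : ((q':ℤ):ℚ) ≠ 0 := by exact_mod_cast hq'0.ne'
      have hp'Q : ((p':ℤ):ℚ) ≠ 0 := by exact_mod_cast hp'0.ne'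
      have hxval : x = (p':ℚ)/(q':ℚ) := by
        rw [hp', hq']; push_cast; exact (Rat.num_div_den x).symm
      have hinvx : 1/x = (q':ℚ)/p' := by rw [hxval, one_div_div]
      have hcross : (p:ℚ) * p' = (q:ℚ) * ((m:ℚ)*p' - q') := by
        have h1 : (p:ℚ)/q = (m:ℚ) - (q':ℚ)/p' := by rw [← heval, hinvx]
        field_simp at h1
        linarith [h1]
      have hcrossZ : p * p' = q * (m*p' - q') := by exact_mod_cast hcross
      have hd0 : (0:ℤ) < m*p' - q' := by nlinarith
      have hcopd : IsCoprime (m*p'-q') p' := by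
        have h1 : IsCoprime (-q') p' := hcop'.neg_left
        have h2 := h1.add_mul_left_left m
        have : -q' + p' * m = m*p' - q' := by ring
        rwa [this] at h2
      have hqeq : q = p' := by
        have hqdvd : q ∣ p' := hcop.dvd_of_dvd_mul_left ⟨m*p'-q', hcrossZ⟩
        have hp'dvd : p' ∣ q := hcopd.symm.dvd_of_dvd_mul_right ⟨p, by linarith [hcrossZ]⟩
        exact Int.dvd_antisymm (by omega) (by omega) hqdvd hp'dvd
      have hpeq : p = m*p' - q' := by
        have h1 : p * p' = (m*p'-q') * p' := by rw [hcrossZ, hqeq]; ring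
        exact mul_right_cancel₀ hp'0.ne' h1
      -- inverse of q' mod p'
      obtain ⟨u, v, huv⟩ := hcop'
      have hcop' : IsCoprime q' p' := ⟨u, v, huv⟩
      set qs' : ℤ := u % p' with hqs'def
      have hqs'0 : 0 ≤ qs' := Int.emod_nonneg _ hp'0.ne'
      have hqs'lt : qs' < p' := Int.emod_lt_of_pos _ hp'0
      have hqs'ne : qs' ≠ 0 := by
        intro h
        have hdvu : p' ∣ u := Int.dvd_of_emod_eq_zero h
        obtain ⟨c, hc⟩ := hdvu
        have : p' ∣ 1 := ⟨c * q' + v, by rw [← huv, hc]; ring⟩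
        have := Int.le_of_dvd one_pos this
        omega
      have hinv' : q' * qs' ≡ 1 [ZMOD p'] := by
        show (q' * qs') % p' = 1 % p'
        rw [hqs'def, Int.mul_emod, Int.emod_emod_of_dvd _ dvd_rfl, ← Int.mul_emod]
        have h1 : q' * u = 1 + p' * (-v) := by linarith
        rw [h1, Int.add_mul_emod_self_left]
      have IH := ih hl (fun a ha => hm a (by simp [ha])) p' q' (by omega) hq'p' hcop'
        hxval qs' (by omega) hqs'lt hinv'
      -- the key bezout-type relation qs * p' = p * qs' + 1
      have hqsrel : qs * p' - p * qs' - 1 = 0 := by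
        have hdvd1 : p ∣ qs * p' - p * qs' - 1 := by
          obtain ⟨t, ht⟩ := hinv.dvd
          refine ⟨-t - qs', ?_⟩
          rw [← hqeq]
          linear_combination -ht
        have hdvd2 : p' ∣ qs * p' - p * qs' - 1 := by
          obtain ⟨t, ht⟩ := hinv'.dvd
          refine ⟨qs - m * qs' - t, ?_⟩
          rw [hpeq]
          linear_combination -ht
        have hcopp : IsCoprime p p' := by rw [← hqeq]; exact hcop.symm
        have hdvd12 : p * p' ∣ qs * p' - p * qs' - 1 := hcopp.mul_dvd hdvd1 hdvd2
        apply Int.eq_zero_of_abs_lt_dvd hdvd12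
        rw [abs_lt]
        constructor <;> nlinarith
      -- assemble
      have hrec := dsum'_reciprocity hp0 hq0 hcop
      have h2 : dsum' p q = dsum' (-q') q := dsum'_mod (by
        rw [Int.modEq_iff_dvd]
        exact ⟨-m, by rw [hpeq, ← hqeq]; ring⟩)
      have h3 : dsum' (-q') q = - dsum' q' q := dsum'_neg hq0 (by rw [hqeq]; exact hcop')
      have h4 : dsum' q' q = dedekindSum q' p' := by
        rw [hqeq]; exact (dedekindSum_eq_dsum' hp'0 hcop').symm
      have key : 12 * dsum' q p = 12 * dedekindSum q' p' - 3
          + ((p:ℚ)/q + (q:ℚ)/p + 1/((p:ℚ)*q)) := by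
        rw [h2, h3, h4] at hrec
        linarith [hrec]
      rw [dedekindSum_eq_dsum' hp0 hcop, key, IH]
      simp only [List.sum_append, List.length_append, List.sum_cons, List.sum_nil,
        List.length_cons, List.length_nil]
      have hqeqQ : (q:ℚ) = (p':ℚ) := by exact_mod_cast congrArg (Int.cast : ℤ → ℚ) hqeq
      have hpeqQ : (p:ℚ) = (m:ℚ)*(p':ℚ) - (q':ℚ) := by
        rw [show ((m:ℚ)*(p':ℚ) - (q':ℚ)) = ((m*p'-q' : ℤ) : ℚ) by push_cast; ring]
        exact_mod_cast congrArg (Int.cast : ℤ → ℚ) hpeq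
      have hqsQ : (qs:ℚ) = ((m:ℚ)*(p':ℚ) - (q':ℚ))*(qs':ℚ)/(p':ℚ) + 1/(p':ℚ) := by
        have hz : qs * p' = (m*p'-q') * qs' + 1 := by
          rw [← hpeq]; linarith [hqsrel]
        have hzQ : (qs:ℚ) * (p':ℚ) = ((m:ℚ)*(p':ℚ) - (q':ℚ))*(qs':ℚ) + 1 := by
          exact_mod_cast congrArg (Int.cast : ℤ → ℚ) hz
        field_simp
        linarith [hzQ]
      rw [hqeqQ, hpeqQ, hqsQ]
      have hdQ : (m:ℚ)*(p':ℚ) - (q':ℚ) ≠ 0 := by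
        rw [← hpeqQ]; exact hpQ0
      have hdQ' : (p':ℚ)*(m:ℚ) - (q':ℚ) ≠ 0 := by rw [mul_comm]; exact hdQ
      push_cast
      field_simp
      ring

/-- Hickerson's formula: if `p > q ≥ 1` are coprime, `p/q` has a negative continued
fraction expansion with partial quotients `m_1, …, m_n` (each `≥ 2`, all partial
evaluations nonzero), and `q*` is the inverse of `q` mod `p` with `0 < q* < p`, then
`12 s(q,p) = ∑ m_i + (q + q*)/p - 3n`. -/
theorem hickerson_formula (p q : ℤ) (hq : 1 ≤ q) (hqp : q < p) (hcop : IsCoprime q p)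
    (ms : List ℤ) (hne : ms ≠ [])
    (hm : ∀ m ∈ ms, 2 ≤ m)
    (hpartials : ∀ x ∈ ncfPartials ms, x ≠ 0)
    (heval : (ncfPartials ms).headI = (p : ℚ) / q)
    (qs : ℤ) (hqs0 : 0 < qs) (hqsp : qs < p) (hinv : q * qs ≡ 1 [ZMOD p]) :
    12 * dedekindSum q p = (ms.sum : ℚ) + ((q : ℚ) + qs) / p - 3 * ms.length := by
  exact hick_aux ms hne hm p q hq hqp hcop heval qs hqs0 hqsp hinv
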